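/- arXiv:0705.1487 — 2 statements merged into one kernel-verified Lean document; each statement's English description precedes it below -/
import Mathlib

section
/- The group presented by ⟨a,b,c ∣ [a⁻¹,c] = 1, bcb⁻¹ca⁻² = 1, ba⁻¹b⁻¹a³c⁻¹ = 1⟩ is isomorphic to the semidirect product ℤ ⋉_A ℤ² where A = [[3,1],[-2,-1]]. -/
open Matrix

/-- The additive automorphism of `ℤ²` induced by a matrix in `GL(2,ℤ)`. -/
def glAddEquiv (A : GL (Fin 2) ℤ) : (Fin 2 → ℤ) ≃+ (Fin 2 → ℤ) where
  toFun v := Matrix.mulVec (A : Matrix (Fin 2) (Fin 2) ℤ) v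
  invFun v := Matrix.mulVec ((A⁻¹ : GL (Fin 2) ℤ) : Matrix (Fin 2) (Fin 2) ℤ) v
  left_inv v := by
    show Matrix.mulVec _ (Matrix.mulVec _ v) = v
    rw [Matrix.mulVec_mulVec, ← Matrix.GeneralLinearGroup.coe_mul, inv_mul_cancel]
    simp
  right_inv v := by
    show Matrix.mulVec _ (Matrix.mulVec _ v) = v
    rw [Matrix.mulVec_mulVec, ← Matrix.GeneralLinearGroup.coe_mul, mul_inv_cancel]
    simp
  map_add' x y := by
    show Matrix.mulVec _ (x+y) = _
    rw [Matrix.mulVec_add]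

/-- The action of `ℤ` on `ℤ²` where `1` acts by the matrix `A`. -/
def glZAction (A : GL (Fin 2) ℤ) :
    Multiplicative ℤ →* MulAut (Multiplicative (Fin 2 → ℤ)) :=
  zpowersHom _ (AddEquiv.toMultiplicative (glAddEquiv A))

/-- The semidirect product `ℤ ⋉_A ℤ²`. -/
def ZSemidirect (A : GL (Fin 2) ℤ) : Type :=
  SemidirectProduct (Multiplicative (Fin 2 → ℤ)) (Multiplicative ℤ) (glZAction A)

instance (A : GL (Fin 2) ℤ) : Group (ZSemidirect A) :=
  inferInstanceAs (Group (SemidirectProduct _ _ (glZAction A)))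

namespace Stmt9

def a : FreeGroup (Fin 3) := FreeGroup.of 0
def b : FreeGroup (Fin 3) := FreeGroup.of 1
def c : FreeGroup (Fin 3) := FreeGroup.of 2

/-- relators; the first one is the commutator [a⁻¹, c] = a⁻¹ * c * a * c⁻¹ -/
def rels : Set (FreeGroup (Fin 3)) :=
  {a⁻¹ * c * a * c⁻¹, b * c * b⁻¹ * c * (a ^ 2)⁻¹, b * a⁻¹ * b⁻¹ * a ^ 3 * c⁻¹}

end Stmt9

/-!
In the presented group `a` and `c` commute, and conjugation by `b` acts on `⟨a, c⟩ ≅ ℤ²` by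
`M = [[3, 2], [-1, -1]]` in the basis `a, c`. For `Q = [[0, -1], [1, 4]] ∈ SL(2, ℤ)` we have
`A Q = Q M`, so `a ↦ (0, 1)`, `c ↦ (-1, 4)`, `b ↦ t` respects the relations. Conversely
`ℤ ⋉_A ℤ²` is generated by commuting `e₀, e₁` and `t` subject only to `t eⱼ t⁻¹ = A eⱼ`, so
`e₀ ↦ a⁴c⁻¹`, `e₁ ↦ a` (the columns of `Q⁻¹`), `t ↦ b` defines the inverse homomorphism.
-/

open Multiplicative

local notation "ℤ²⋊" A => Multiplicative (Fin 2 → ℤ) ⋊[glZAction A] Multiplicative ℤ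

section IntPairs

variable {G : Type*} [Group G]

theorem Multiplicative.ofAdd_eq_zpow_mul_zpow (v : Fin 2 → ℤ) :
    ofAdd v = ofAdd (Pi.single 0 1) ^ v 0 * ofAdd (Pi.single 1 1) ^ v 1 := by
  rw [← ofAdd_zsmul, ← ofAdd_zsmul, ← ofAdd_add]
  congr 1
  ext i
  fin_cases i <;> simp

theorem MonoidHom.ext_fin_two_int {f g : Multiplicative (Fin 2 → ℤ) →* G}
    (h₀ : f (ofAdd (Pi.single 0 1)) = g (ofAdd (Pi.single 0 1)))
    (h₁ : f (ofAdd (Pi.single 1 1)) = g (ofAdd (Pi.single 1 1))) : f = g := by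
  refine DFunLike.ext _ _ fun v => ?_
  rw [← ofAdd_toAdd v, ofAdd_eq_zpow_mul_zpow, map_mul, map_mul, map_zpow, map_zpow,
    map_zpow, map_zpow, h₀, h₁]

def Commute.zpowPairHom {x y : G} (h : Commute x y) : Multiplicative (Fin 2 → ℤ) →* G where
  toFun v := x ^ v.toAdd 0 * y ^ v.toAdd 1
  map_one' := by simp
  map_mul' v w := by
    simp only [toAdd_mul, Pi.add_apply, _root_.zpow_add]
    rw [mul_assoc, mul_assoc, ← mul_assoc (y ^ _), ← (h.zpow_zpow _ _).eq]
    group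

@[simp]
theorem Commute.zpowPairHom_ofAdd {x y : G} (h : Commute x y) (v : Fin 2 → ℤ) :
    h.zpowPairHom (ofAdd v) = x ^ v 0 * y ^ v 1 :=
  rfl

end IntPairs

section ZPowersLift

variable {N G : Type*} [Group N] [Group G] {σ : MulAut N}

theorem MonoidHom.map_zpow_aut_apply {f : N →* G} {t : G}
    (hf : ∀ n, f (σ n) = t * f n * t⁻¹) (k : ℤ) (n : N) :
    f ((σ ^ k) n) = t ^ k * f n * (t ^ k)⁻¹ := by
  induction k using Int.induction_on generalizing n with
  | zero => simp
  | succ k ih => rw [_root_.zpow_add_one, MulAut.mul_apply, ih, hf]; group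
  | pred k ih =>
    have hf_inv : f (σ⁻¹ n) = t⁻¹ * f n * t := by
      have h := hf (σ⁻¹ n)
      rw [MulAut.apply_inv_self] at h
      rw [h]; group
    rw [_root_.zpow_sub_one, MulAut.mul_apply, ih, hf_inv]; group

def SemidirectProduct.liftZPowers (f : N →* G) (t : G) (hf : ∀ n, f (σ n) = t * f n * t⁻¹) :
    N ⋊[zpowersHom _ σ] Multiplicative ℤ →* G :=
  lift f (zpowersHom G t) fun k => MonoidHom.ext fun n => f.map_zpow_aut_apply hf k.toAdd n

@[simp]
theorem SemidirectProduct.liftZPowers_inl (f : N →* G) (t : G)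
    (hf : ∀ n, f (σ n) = t * f n * t⁻¹) (n : N) : liftZPowers f t hf (inl n) = f n :=
  lift_inl _ _ _ n

@[simp]
theorem SemidirectProduct.liftZPowers_inr (f : N →* G) (t : G)
    (hf : ∀ n, f (σ n) = t * f n * t⁻¹) (k : Multiplicative ℤ) :
    liftZPowers f t hf (inr k) = t ^ k.toAdd :=
  lift_inr _ _ _ k

end ZPowersLift

namespace ZSemidirect

variable {A : GL (Fin 2) ℤ} {G : Type*} [Group G]

-- `inr (ofAdd (-1))` rather than `(inr (ofAdd 1))⁻¹` is the `simp` normal form met below.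
theorem inr_mul_inl_mul_inr_neg_one (v : Fin 2 → ℤ) :
    (SemidirectProduct.inr (ofAdd 1) * SemidirectProduct.inl (ofAdd v) *
      SemidirectProduct.inr (ofAdd (-1)) : ℤ²⋊ A) =
    SemidirectProduct.inl (ofAdd ((A : Matrix (Fin 2) (Fin 2) ℤ) *ᵥ v)) := by
  rw [ofAdd_neg, ← SemidirectProduct.inl_aut]
  rfl

theorem hom_ext {f g : (ℤ²⋊ A) →* G}
    (h₀ : f (SemidirectProduct.inl (ofAdd (Pi.single 0 1))) =
      g (SemidirectProduct.inl (ofAdd (Pi.single 0 1))))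
    (h₁ : f (SemidirectProduct.inl (ofAdd (Pi.single 1 1))) =
      g (SemidirectProduct.inl (ofAdd (Pi.single 1 1))))
    (ht : f (SemidirectProduct.inr (ofAdd 1)) = g (SemidirectProduct.inr (ofAdd 1))) :
    f = g :=
  SemidirectProduct.hom_ext (MonoidHom.ext_fin_two_int h₀ h₁) (MonoidHom.ext_mint ht)

variable (A) {x y : G} (t : G) (hxy : Commute x y)
  (hx : t * x * t⁻¹ = x ^ A 0 0 * y ^ A 1 0) (hy : t * y * t⁻¹ = x ^ A 0 1 * y ^ A 1 1)

def lift : (ℤ²⋊ A) →* G :=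
  SemidirectProduct.liftZPowers hxy.zpowPairHom t fun n => by
    suffices h : hxy.zpowPairHom.comp (AddEquiv.toMultiplicative (glAddEquiv A)).toMonoidHom =
        (MulAut.conj t).toMonoidHom.comp hxy.zpowPairHom from DFunLike.congr_fun h n
    refine MonoidHom.ext_fin_two_int ?_ ?_
    · simp [glAddEquiv, hx]
    · simp [glAddEquiv, hy]

@[simp]
theorem lift_inl (v : Fin 2 → ℤ) :
    lift A t hxy hx hy (SemidirectProduct.inl (ofAdd v)) = x ^ v 0 * y ^ v 1 :=
  SemidirectProduct.liftZPowers_inl _ _ _ _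

@[simp]
theorem lift_inr : lift A t hxy hx hy (SemidirectProduct.inr (ofAdd 1)) = t :=
  (SemidirectProduct.liftZPowers_inr _ _ _ _).trans (zpow_one t)

end ZSemidirect

namespace Stmt9

local notation "𝐚" => (PresentedGroup.of 0 : PresentedGroup rels)
local notation "𝐛" => (PresentedGroup.of 1 : PresentedGroup rels)
local notation "𝐜" => (PresentedGroup.of 2 : PresentedGroup rels)

theorem commute_a_c : Commute 𝐚 𝐜 := by
  have h := PresentedGroup.one_of_mem (show a⁻¹ * c * a * c⁻¹ ∈ rels by simp [rels])
  simp only [map_mul, map_inv] at h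
  rw [mul_inv_eq_one, mul_assoc, inv_mul_eq_iff_eq_mul] at h
  exact h.symm

theorem b_mul_c_mul_b_inv : 𝐛 * 𝐜 * 𝐛⁻¹ = 𝐚 ^ 2 * 𝐜⁻¹ := by
  have h := PresentedGroup.one_of_mem
    (show b * c * b⁻¹ * c * (a ^ 2)⁻¹ ∈ rels by simp [rels])
  simp only [map_mul, map_inv, map_pow] at h
  exact eq_mul_inv_of_mul_eq (mul_inv_eq_one.mp h)

theorem b_mul_a_mul_b_inv : 𝐛 * 𝐚 * 𝐛⁻¹ = 𝐚 ^ 3 * 𝐜⁻¹ := by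
  have h := PresentedGroup.one_of_mem
    (show b * a⁻¹ * b⁻¹ * a ^ 3 * c⁻¹ ∈ rels by simp [rels])
  simp only [map_mul, map_inv, map_pow] at h
  have h_inv : 𝐛 * 𝐚⁻¹ * 𝐛⁻¹ = 𝐜 * (𝐚 ^ 3)⁻¹ := eq_mul_inv_of_mul_eq (mul_inv_eq_one.mp h)
  calc 𝐛 * 𝐚 * 𝐛⁻¹ = (𝐛 * 𝐚⁻¹ * 𝐛⁻¹)⁻¹ := by group
    _ = 𝐚 ^ 3 * 𝐜⁻¹ := by rw [h_inv]; group

def acHom : Multiplicative (Fin 2 → ℤ) →* PresentedGroup rels :=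
  commute_a_c.zpowPairHom

@[simp]
theorem acHom_ofAdd (v : Fin 2 → ℤ) : acHom (ofAdd v) = 𝐚 ^ v 0 * 𝐜 ^ v 1 :=
  rfl

theorem b_mul_acHom_mul_b_inv (v : Fin 2 → ℤ) :
    𝐛 * acHom (ofAdd v) * 𝐛⁻¹ = acHom (ofAdd (!![3, 2; -1, -1] *ᵥ v)) := by
  suffices h : (MulAut.conj 𝐛).toMonoidHom.comp acHom =
      acHom.comp (Matrix.mulVecLin !![3, 2; -1, -1]).toAddMonoidHom.toMultiplicative from
    DFunLike.congr_fun h (ofAdd v)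
  refine MonoidHom.ext_fin_two_int ?_ ?_
  · simp [b_mul_a_mul_b_inv]
  · simp [b_mul_c_mul_b_inv]

variable (A : GL (Fin 2) ℤ) (hA : (A : Matrix (Fin 2) (Fin 2) ℤ) = !![3, 1; -2, -1])

def semidirectGens : Fin 3 → ℤ²⋊ A :=
  ![SemidirectProduct.inl (ofAdd ![0, 1]), SemidirectProduct.inr (ofAdd 1),
    SemidirectProduct.inl (ofAdd ![-1, 4])]

include hA in
theorem lift_semidirectGens_rels : ∀ r ∈ rels, FreeGroup.lift (semidirectGens A) r = 1 := by
  simp only [rels, Set.mem_insert_iff, Set.mem_singleton_iff]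
  rintro r (rfl | rfl | rfl) <;>
  simp only [a, b, c, semidirectGens, map_mul, map_inv, map_pow, FreeGroup.lift_apply_of,
    Matrix.cons_val] <;>
  simp only [← map_inv, ← map_pow, ← ofAdd_neg, ← ofAdd_nsmul,
    ZSemidirect.inr_mul_inl_mul_inr_neg_one, ← map_mul, ← ofAdd_add, hA] <;>
  convert map_one (SemidirectProduct.inl (φ := glZAction A)) using 2 <;>
  decide

def toSemidirect : PresentedGroup rels →* ℤ²⋊ A :=
  PresentedGroup.toGroup (lift_semidirectGens_rels A hA)

def ofSemidirect : (ℤ²⋊ A) →* PresentedGroup rels :=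
  ZSemidirect.lift A 𝐛 (x := acHom (ofAdd ![4, -1])) (y := acHom (ofAdd ![1, 0]))
    ((Commute.all _ _).map acHom)
    (by
      simp only [b_mul_acHom_mul_b_inv, ← map_zpow, ← map_mul, ← ofAdd_zsmul, ← ofAdd_add, hA]
      congr 2
      decide)
    (by
      simp only [b_mul_acHom_mul_b_inv, ← map_zpow, ← map_mul, ← ofAdd_zsmul, ← ofAdd_add, hA]
      congr 2
      decide)

theorem ofSemidirect_comp_toSemidirect :
    (ofSemidirect A hA).comp (toSemidirect A hA) = MonoidHom.id _ := by
  refine PresentedGroup.ext fun i => ?_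
  fin_cases i <;> simp [toSemidirect, ofSemidirect, semidirectGens]

theorem toSemidirect_comp_ofSemidirect :
    (toSemidirect A hA).comp (ofSemidirect A hA) = MonoidHom.id _ := by
  refine ZSemidirect.hom_ext ?_ ?_ ?_ <;> simp [toSemidirect, ofSemidirect, semidirectGens]
  · simp only [← map_pow, ← map_inv, ← map_mul, ← ofAdd_nsmul, ← ofAdd_neg, ← ofAdd_add]
    congr 2
    decide
  · decide

/-- The presented group is isomorphic to the semidirect product given by
the matrix [[3,1],[-2,-1]]. -/
theorem presented_iso_semidirect (A : GL (Fin 2) ℤ)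
    (hA : (A : Matrix (Fin 2) (Fin 2) ℤ) = !![3, 1; -2, -1]) :
    Nonempty (PresentedGroup rels ≃* ZSemidirect A) :=
  ⟨MonoidHom.toMulEquiv (toSemidirect A hA) (ofSemidirect A hA)
    (ofSemidirect_comp_toSemidirect A hA) (toSemidirect_comp_ofSemidirect A hA)⟩

end Stmt9
end

section
/- The abelianization of the group presented by ⟨a,b,c,d,e ∣ a⁻¹bd⁻¹ec, c⁻¹db, d⁻¹ae⁻¹, a⁻¹ec⁻¹d, d⁻¹b⁻¹c⟩ is isomorphic to ℤ ⊕ ℤ/3ℤ. -/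
/-!
In a commutative group the relators become linear relations among the generators; they force
`c = 1`, `d = b⁻¹`, `a = e b⁻¹` and `b³ = 1`, so the abelianization is generated by `e` and by `b`
of order dividing `3`. Conversely `a, b, c, d, e ↦ (1, -1), (0, 1), (0, 0), (0, -1), (1, 0)`
satisfies the relators in `ℤ × ZMod 3`, and the two homomorphisms are mutually inverse.
-/

namespace Stmt13

def a : FreeGroup (Fin 5) := FreeGroup.of 0
def b : FreeGroup (Fin 5) := FreeGroup.of 1
def c : FreeGroup (Fin 5) := FreeGroup.of 2
def d : FreeGroup (Fin 5) := FreeGroup.of 3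
def e : FreeGroup (Fin 5) := FreeGroup.of 4

/-- the relators of the presentation -/
def rels : Set (FreeGroup (Fin 5)) :=
  {a⁻¹ * b * d⁻¹ * e * c, c⁻¹ * d * b, d⁻¹ * a * e⁻¹, a⁻¹ * e * c⁻¹ * d, d⁻¹ * b⁻¹ * c}

open Multiplicative

section IntProdZMod

variable {n : ℕ} {M : Type*}

lemma ofAdd_intCast_prod (m k : ℤ) :
    ofAdd ((m, k) : ℤ × ZMod n) = ofAdd (1, 0) ^ m * ofAdd (0, 1) ^ k := by
  rw [← ofAdd_zsmul, ← ofAdd_zsmul, ← ofAdd_add]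
  simp

lemma monoidHom_ext_intProdZMod [Group M] {f g : Multiplicative (ℤ × ZMod n) →* M}
    (h₁ : f (ofAdd (1, 0)) = g (ofAdd (1, 0))) (h₂ : f (ofAdd (0, 1)) = g (ofAdd (0, 1))) :
    f = g := by
  refine MonoidHom.ext fun p => ?_
  obtain ⟨⟨m, z⟩, rfl⟩ := ofAdd.surjective p
  obtain ⟨k, rfl⟩ := ZMod.intCast_surjective z
  simp only [ofAdd_intCast_prod, map_mul, map_zpow, h₁, h₂]

variable [CommGroup M]

def intProdZModLift (x y : M) (hy : y ^ n = 1) : Multiplicative (ℤ × ZMod n) →* M :=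
  AddMonoidHom.toMultiplicativeLeft <| (zmultiplesHom _ (Additive.ofMul x)).coprod
    (ZMod.lift n ⟨zmultiplesHom _ (Additive.ofMul y), by simp [← ofMul_pow, hy]⟩)

lemma intProdZModLift_ofAdd_intCast (x y : M) (hy : y ^ n = 1) (m k : ℤ) :
    intProdZModLift x y hy (ofAdd (m, k)) = x ^ m * y ^ k := by
  simp [intProdZModLift]

@[simp]
lemma intProdZModLift_ofAdd_one_zero (x y : M) (hy : y ^ n = 1) :
    intProdZModLift x y hy (ofAdd (1, 0)) = x := by
  simp [intProdZModLift]

@[simp]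
lemma intProdZModLift_ofAdd_zero_one (x y : M) (hy : y ^ n = 1) :
    intProdZModLift x y hy (ofAdd (0, 1)) = y := by
  simpa using intProdZModLift_ofAdd_intCast x y hy 0 1

end IntProdZMod

lemma map_of_of_commGroup {M : Type*} [CommGroup M] (φ : PresentedGroup rels →* M) :
    φ (.of 0) = φ (.of 4) * (φ (.of 1))⁻¹ ∧ φ (.of 2) = 1 ∧ φ (.of 3) = (φ (.of 1))⁻¹ ∧
      φ (.of 1) ^ 3 = 1 := by
  have hrel : ∀ r ∈ rels, Additive.ofMul (φ (PresentedGroup.mk rels r)) = 0 := fun r hr => by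
    rw [PresentedGroup.one_of_mem hr, map_one, ofMul_one]
  have h₁ := hrel (a⁻¹ * b * d⁻¹ * e * c) (by simp [rels])
  have h₃ := hrel (d⁻¹ * a * e⁻¹) (by simp [rels])
  have h₄ := hrel (a⁻¹ * e * c⁻¹ * d) (by simp [rels])
  have h₅ := hrel (d⁻¹ * b⁻¹ * c) (by simp [rels])
  simp only [a, b, c, d, e, map_mul, map_inv, ofMul_mul, ofMul_inv] at h₁ h₃ h₄ h₅
  refine ⟨?_, ?_, ?_, ?_⟩ <;> apply Additive.ofMul.injective <;>
    simp only [PresentedGroup.of, ofMul_mul, ofMul_inv, ofMul_one, ofMul_pow]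
  · linear_combination (norm := abel) -h₄ - h₅
  · linear_combination (norm := abel) -h₃ - h₄
  · linear_combination (norm := abel) -h₃ - h₄ - h₅
  · linear_combination (norm := abel) h₁ - h₄ - (2 : ℤ) • h₅

def gen : Fin 5 → Multiplicative (ℤ × ZMod 3) :=
  ![ofAdd (1, 0) * (ofAdd (0, 1))⁻¹, ofAdd (0, 1), 1, (ofAdd (0, 1))⁻¹, ofAdd (1, 0)]

lemma lift_gen_rels : ∀ r ∈ rels, FreeGroup.lift gen r = 1 := by
  simp only [rels, Set.mem_insert_iff, Set.mem_singleton_iff, forall_eq_or_imp, forall_eq,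
    a, b, c, d, e, map_mul, map_inv, FreeGroup.lift_apply_of]
  decide

def toProd : Abelianization (PresentedGroup rels) →* Multiplicative (ℤ × ZMod 3) :=
  Abelianization.lift (PresentedGroup.toGroup lift_gen_rels)

@[simp]
lemma toProd_of_of (i : Fin 5) : toProd (.of (.of i)) = gen i := by
  simp [toProd, PresentedGroup.toGroup.of]

def ofProd : Multiplicative (ℤ × ZMod 3) →* Abelianization (PresentedGroup rels) :=
  intProdZModLift (.of (.of 4)) (.of (.of 1)) (map_of_of_commGroup Abelianization.of).2.2.2

/-- The abelianization of the presented group. -/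
theorem abelianization_presented :
    Nonempty (Abelianization (PresentedGroup rels) ≃* Multiplicative (ℤ × ZMod 3)) := by
  refine ⟨MonoidHom.toMulEquiv toProd ofProd ?_ ?_⟩
  · obtain ⟨h₀, h₂, h₃, -⟩ := map_of_of_commGroup (Abelianization.of (G := PresentedGroup rels))
    refine Abelianization.hom_ext _ _ (PresentedGroup.ext fun i => ?_)
    fin_cases i <;> simp [gen, ofProd, h₀, h₂, h₃]
  · apply monoidHom_ext_intProdZMod <;> simp [ofProd, gen]

end Stmt13
end
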